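/- arXiv:1804.06095 — 2 statements merged into one kernel-verified Lean document; each statement's English description precedes it below -/
import Mathlib

section
/- For symmetric positive definite matrices Q and M of the same size, LogDet(Q, M) ≥ LogDet(Q_vv, M_vv), where Q_vv and M_vv are the leading principal n×n submatrices. -/
/-!
`logDetDiv` is invariant under congruence `(Q, M) ↦ (L Q Lᴴ, L M Lᴴ)`. The block elimination
matrix `L = [[1, 0], [-M₂₁ M₁₁⁻¹, 1]]` does not change leading blocks and turns `M` into
`diag(M₁₁, T)`, with `T` the Schur complement of `M₁₁` in `M`. Against a block-diagonal `M`, the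
Schur determinant formula splits
`LogDet(Q, M) = LogDet(Q₁₁, M₁₁) + LogDet(S, T) + ½ tr(T⁻¹ Q₁₂ᴴ Q₁₁⁻¹ Q₁₂)`,
with `S` the Schur complement of `Q₁₁` in `Q`, and both extra terms are nonnegative: the first
by `log λ ≤ λ - 1` on the eigenvalues, after a congruence taking `T` to `1`.
-/

open Matrix

noncomputable def logDetDiv {n : Type*} [Fintype n] [DecidableEq n]
    (Q M : Matrix n n ℝ) : ℝ :=
  (1 / 2) * (Real.log M.det - Real.log Q.det + (M⁻¹ * (Q - M)).trace)

namespace Matrix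

theorem trace_fromBlocks {a b R : Type*} [Fintype a] [Fintype b] [AddCommMonoid R]
    (A : Matrix a a R) (B : Matrix a b R) (C : Matrix b a R) (D : Matrix b b R) :
    (fromBlocks A B C D).trace = A.trace + D.trace := by
  simp [trace, Fintype.sum_sum_type]

theorem IsHermitian.toBlocks₂₁ {a b R : Type*} [InvolutiveStar R]
    {P : Matrix (a ⊕ b) (a ⊕ b) R} (hP : P.IsHermitian) : P.toBlocks₂₁ = P.toBlocks₁₂ᴴ := by
  ext i j
  exact (hP.apply _ _).symm

theorem PosDef.toBlocks₁₁ {a b R : Type*} [Ring R] [PartialOrder R] [StarRing R]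
    {P : Matrix (a ⊕ b) (a ⊕ b) R} (hP : P.PosDef) : P.toBlocks₁₁.PosDef :=
  hP.submatrix Sum.inl_injective

theorem PosDef.toBlocks₂₂ {a b R : Type*} [Ring R] [PartialOrder R] [StarRing R]
    {P : Matrix (a ⊕ b) (a ⊕ b) R} (hP : P.PosDef) : P.toBlocks₂₂.PosDef :=
  hP.submatrix Sum.inr_injective

open scoped ComplexOrder MatrixOrder in
theorem PosSemidef.trace_mul_nonneg {n 𝕜 : Type*} [Fintype n] [DecidableEq n] [RCLike 𝕜]
    {A B : Matrix n n 𝕜} (hA : A.PosSemidef) (hB : B.PosSemidef) : 0 ≤ (A * B).trace := by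
  obtain ⟨C, rfl⟩ := CStarAlgebra.nonneg_iff_eq_star_mul_self.mp hA.nonneg
  rw [star_eq_conjTranspose, Matrix.mul_assoc, trace_mul_comm]
  simpa [Matrix.mul_assoc] using (hB.mul_mul_conjTranspose_same C).trace_nonneg

section BlockElimination

variable {a b R : Type*} [Fintype a] [Fintype b] [DecidableEq a] [DecidableEq b] [CommRing R]

noncomputable def schurComplement (P : Matrix (a ⊕ b) (a ⊕ b) R) : Matrix b b R :=
  P.toBlocks₂₂ - P.toBlocks₂₁ * P.toBlocks₁₁⁻¹ * P.toBlocks₁₂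

noncomputable def blockElimination (P : Matrix (a ⊕ b) (a ⊕ b) R) : Matrix (a ⊕ b) (a ⊕ b) R :=
  fromBlocks 1 0 (-(P.toBlocks₂₁ * P.toBlocks₁₁⁻¹)) 1

@[simp]
theorem det_blockElimination (P : Matrix (a ⊕ b) (a ⊕ b) R) : (blockElimination P).det = 1 := by
  simp [blockElimination]

theorem isUnit_blockElimination (P : Matrix (a ⊕ b) (a ⊕ b) R) : IsUnit (blockElimination P) := by
  simp [isUnit_iff_isUnit_det]

variable [StarRing R]

theorem toBlocks₁₁_blockElimination_mul_mul_conjTranspose (P Q : Matrix (a ⊕ b) (a ⊕ b) R) :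
    (blockElimination P * Q * (blockElimination P)ᴴ).toBlocks₁₁ = Q.toBlocks₁₁ := by
  rw [← fromBlocks_toBlocks Q]
  simp [blockElimination, fromBlocks_conjTranspose, fromBlocks_multiply]

theorem blockElimination_mul_self_mul_conjTranspose {P : Matrix (a ⊕ b) (a ⊕ b) R}
    (hP : P.IsHermitian) (hA : IsUnit P.toBlocks₁₁.det) :
    blockElimination P * P * (blockElimination P)ᴴ =
      fromBlocks P.toBlocks₁₁ 0 0 (schurComplement P) := by
  have hA' : P.toBlocks₁₁ᴴ = P.toBlocks₁₁ := congr_arg toBlocks₁₁ hP.eq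
  conv_lhs => rw [← fromBlocks_toBlocks P]
  simp [blockElimination, schurComplement, fromBlocks_conjTranspose, fromBlocks_multiply,
    conjTranspose_nonsing_inv, hA', hP.toBlocks₂₁, Matrix.mul_assoc, hA, neg_add_eq_sub]

end BlockElimination

theorem PosDef.schurComplement {a b K : Type*} [Fintype a] [Fintype b] [DecidableEq a]
    [DecidableEq b] [Field K] [PartialOrder K] [StarRing K] {P : Matrix (a ⊕ b) (a ⊕ b) K}
    (hP : P.PosDef) : (schurComplement P).PosDef := by
  have h := hP.mul_mul_conjTranspose_same
    (vecMul_injective_iff_isUnit.mpr (isUnit_blockElimination P))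
  rw [blockElimination_mul_self_mul_conjTranspose hP.1
    ((isUnit_iff_isUnit_det _).mp hP.toBlocks₁₁.isUnit)] at h
  simpa using h.toBlocks₂₂

theorem PosDef.log_det_le_trace_sub_card {n : Type*} [Fintype n] [DecidableEq n]
    {X : Matrix n n ℝ} (hX : X.PosDef) : Real.log X.det ≤ X.trace - Fintype.card n := by
  have hpos := hX.eigenvalues_pos
  have hdet : X.det = ∏ i, hX.1.eigenvalues i := by simpa using hX.1.det_eq_prod_eigenvalues
  have htr : X.trace = ∑ i, hX.1.eigenvalues i := by simpa using hX.1.trace_eq_sum_eigenvalues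
  rw [hdet, htr, Real.log_prod fun i _ => (hpos i).ne']
  have := Finset.sum_le_sum fun i (_ : i ∈ Finset.univ) => Real.log_le_sub_one_of_pos (hpos i)
  simpa [Finset.sum_sub_distrib] using this

end Matrix

section Congruence

variable {n : Type*} [Fintype n] [DecidableEq n]

theorem logDetDiv_conj {L Q M : Matrix n n ℝ} (hL : IsUnit L) (hQ : Q.det ≠ 0)
    (hM : M.det ≠ 0) : logDetDiv (L * Q * Lᴴ) (L * M * Lᴴ) = logDetDiv Q M := by
  rw [isUnit_iff_isUnit_det] at hL
  have hL0 : L.det ≠ 0 := hL.ne_zero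
  have hlog (X : Matrix n n ℝ) (hX : X.det ≠ 0) :
      Real.log (L * X * Lᴴ).det = Real.log X.det + 2 * Real.log L.det := by
    rw [det_mul, det_mul, det_conjTranspose, star_trivial, Real.log_mul (by positivity) hL0,
      Real.log_mul hL0 hX]
    ring
  have htrace :
      ((L * M * Lᴴ)⁻¹ * (L * Q * Lᴴ - L * M * Lᴴ)).trace = (M⁻¹ * (Q - M)).trace := by
    rw [← sub_mul, ← mul_sub, Matrix.mul_inv_rev, Matrix.mul_inv_rev, ← trace_mul_cycle]
    have hLH : IsUnit Lᴴ.det := by rwa [det_conjTranspose, star_trivial]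
    simp only [Matrix.mul_assoc, nonsing_inv_mul_cancel_left _ _ hL, mul_nonsing_inv _ hLH,
      Matrix.mul_one]
  simp only [logDetDiv, hlog Q hQ, hlog M hM, htrace]
  ring

open scoped MatrixOrder in
theorem logDetDiv_nonneg {Q M : Matrix n n ℝ} (hQ : Q.PosDef) (hM : M.PosDef) :
    0 ≤ logDetDiv Q M := by
  obtain ⟨y, hy, rfl⟩ := CStarAlgebra.isStrictlyPositive_iff_eq_mul_star_self.mp
    hM.isStrictlyPositive
  rw [star_eq_conjTranspose] at hM ⊢
  have hL : IsUnit y⁻¹ := isUnit_nonsing_inv_iff.mpr hy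
  have hM1 : y⁻¹ * (y * yᴴ) * y⁻¹ᴴ = 1 := by
    rw [conjTranspose_nonsing_inv,
      nonsing_inv_mul_cancel_left _ _ ((isUnit_iff_isUnit_det y).mp hy),
      mul_nonsing_inv _ ((isUnit_iff_isUnit_det yᴴ).mp hy.star)]
  rw [← logDetDiv_conj hL hQ.det_pos.ne' hM.det_pos.ne', hM1]
  have hX := (hQ.mul_mul_conjTranspose_same (vecMul_injective_iff_isUnit.mpr hL))
    |>.log_det_le_trace_sub_card
  simp only [logDetDiv, det_one, Real.log_one, inv_one, Matrix.one_mul, trace_sub, trace_one]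
  linarith

end Congruence

section BlockDiagonal

variable {a b : Type*} [Fintype a] [Fintype b] [DecidableEq a] [DecidableEq b]

theorem logDetDiv_fromBlocks_zero {P : Matrix (a ⊕ b) (a ⊕ b) ℝ} {E : Matrix a a ℝ}
    {T : Matrix b b ℝ} (hA : IsUnit P.toBlocks₁₁.det) (hS : (schurComplement P).det ≠ 0)
    (hE : IsUnit E.det) (hT : IsUnit T.det) :
    logDetDiv P (fromBlocks E 0 0 T) =
      logDetDiv P.toBlocks₁₁ E + logDetDiv (schurComplement P) T +
        (1 / 2) * (T⁻¹ * (P.toBlocks₂₁ * P.toBlocks₁₁⁻¹ * P.toBlocks₁₂)).trace := by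
  have hdetP : P.det = P.toBlocks₁₁.det * (schurComplement P).det := by
    let := invertibleOfIsUnitDet _ hA
    conv_lhs => rw [← fromBlocks_toBlocks P]
    rw [det_fromBlocks₁₁, invOf_eq_nonsing_inv, schurComplement]
  have hinv : (fromBlocks E 0 0 T)⁻¹ = fromBlocks E⁻¹ 0 0 T⁻¹ := by
    rw [inv_fromBlocks_zero₂₁_of_isUnit_iff _ _ _ (iff_of_true ((isUnit_iff_isUnit_det E).mpr hE)
      ((isUnit_iff_isUnit_det T).mpr hT))]
    simp
  have htrace : ((fromBlocks E 0 0 T)⁻¹ * (P - fromBlocks E 0 0 T)).trace =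
      (E⁻¹ * (P.toBlocks₁₁ - E)).trace + (T⁻¹ * (P.toBlocks₂₂ - T)).trace := by
    conv_lhs => rw [hinv, ← fromBlocks_toBlocks P]
    simp only [Matrix.mul_sub, trace_sub, fromBlocks_multiply, trace_fromBlocks, Matrix.mul_zero,
      Matrix.zero_mul, add_zero, zero_add]
    ring
  have hD : P.toBlocks₂₂ - T =
      (schurComplement P - T) + P.toBlocks₂₁ * P.toBlocks₁₁⁻¹ * P.toBlocks₁₂ := by
    rw [schurComplement]
    abel
  unfold logDetDiv
  rw [hdetP, det_fromBlocks_zero₂₁, Real.log_mul hA.ne_zero hS, Real.log_mul hE.ne_zero hT.ne_zero,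
    htrace, hD, Matrix.mul_add, trace_add]
  ring

theorem logDetDiv_toBlocks₁₁_le_fromBlocks_zero {P : Matrix (a ⊕ b) (a ⊕ b) ℝ}
    {E : Matrix a a ℝ} {T : Matrix b b ℝ} (hP : P.PosDef) (hE : E.PosDef) (hT : T.PosDef) :
    logDetDiv P.toBlocks₁₁ E ≤ logDetDiv P (fromBlocks E 0 0 T) := by
  have hA := hP.toBlocks₁₁
  have hS := hP.schurComplement
  have hcross := hT.inv.posSemidef.trace_mul_nonneg
    (hA.inv.posSemidef.conjTranspose_mul_mul_same P.toBlocks₁₂)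
  rw [logDetDiv_fromBlocks_zero hA.det_pos.ne'.isUnit hS.det_pos.ne' hE.det_pos.ne'.isUnit
    hT.det_pos.ne'.isUnit, hP.1.toBlocks₂₁]
  linarith [logDetDiv_nonneg hS hT]

end BlockDiagonal

theorem logDetDiv_ge_logDetDiv_principal_submatrix {n m : ℕ}
    (Q M : Matrix (Fin n ⊕ Fin m) (Fin n ⊕ Fin m) ℝ)
    (hQ : Q.PosDef) (hM : M.PosDef) :
    logDetDiv Q.toBlocks₁₁ M.toBlocks₁₁ ≤ logDetDiv Q M := by
  set L := blockElimination M
  have hL : IsUnit L := isUnit_blockElimination M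
  have hLM : L * M * Lᴴ = fromBlocks M.toBlocks₁₁ 0 0 (schurComplement M) :=
    blockElimination_mul_self_mul_conjTranspose hM.1 hM.toBlocks₁₁.det_pos.ne'.isUnit
  calc logDetDiv Q.toBlocks₁₁ M.toBlocks₁₁
      = logDetDiv (L * Q * Lᴴ).toBlocks₁₁ M.toBlocks₁₁ := by
        rw [toBlocks₁₁_blockElimination_mul_mul_conjTranspose]
    _ ≤ logDetDiv (L * Q * Lᴴ) (fromBlocks M.toBlocks₁₁ 0 0 (schurComplement M)) :=
        logDetDiv_toBlocks₁₁_le_fromBlocks_zero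
          (hQ.mul_mul_conjTranspose_same (vecMul_injective_iff_isUnit.mpr hL)) hM.toBlocks₁₁
          hM.schurComplement
    _ = logDetDiv Q M := by
        rw [← hLM, logDetDiv_conj hL hQ.det_pos.ne' hM.det_pos.ne']
end

section
/- Let S be ℓ×ℓ symmetric positive definite with eigendecomposition as above, q < ℓ, σ² = (1/(ℓ−q)) Σ_{j>q} λ_j with λ_q > σ², and W = U_q(Λ_q − σ²I)^{1/2}R for any orthonormal R (RᵀR = I). Then WWᵀ + σ²I has eigenvalues λ₁,…,λ_q (each with the corresponding eigenvector u_i) and σ² with multiplicity ℓ−q, and hence log det(WWᵀ + σ²I) = Σ_{j≤q} log λ_j + (ℓ−q) log σ² and trace((WWᵀ+σ²I)⁻¹S) = q + Σ_{j>q} λ_j/σ² = ℓ. -/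
/-!
In the eigenbasis `U` everything is diagonal. Since `R` is orthogonal and
`√(λᵢ - σ²)² = λᵢ - σ²`, `W Wᵀ = U diag(λ₁ - σ², …, λ_q - σ², 0, …, 0) Uᵀ`, so the model
covariance is `U diag g Uᵀ` with `g = (λ₁, …, λ_q, σ², …, σ²)`. Determinant, inverse and trace
against `S = U diag λ Uᵀ` are then computed on `g`, and `σ²` being the mean of the discarded
eigenvalues gives `∑_{j ≥ q} λ_j / σ² = ℓ - q`.
-/

open Matrix

namespace Matrix

section Conjugation

variable {n α : Type*} [Fintype n] [DecidableEq n] [CommRing α] {U : Matrix n n α}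

theorem mul_diagonal_mul_transpose_mul_self (hU : Uᵀ * U = 1) (d : n → α) :
    U * diagonal d * Uᵀ * U = U * diagonal d := by
  rw [Matrix.mul_assoc, hU, Matrix.mul_one]

theorem mul_diagonal_mul_transpose_mul_mul_diagonal_mul_transpose (hU : Uᵀ * U = 1)
    (a b : n → α) :
    U * diagonal a * Uᵀ * (U * diagonal b * Uᵀ) = U * diagonal (a * b) * Uᵀ := by
  calc U * diagonal a * Uᵀ * (U * diagonal b * Uᵀ)
      = U * diagonal a * (Uᵀ * U) * diagonal b * Uᵀ := by simp only [Matrix.mul_assoc]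
    _ = U * diagonal (a * b) * Uᵀ := by
      rw [hU, Matrix.mul_one, Matrix.mul_assoc U, diagonal_mul_diagonal]; rfl

theorem smul_one_eq_mul_diagonal_mul_transpose (hU : Uᵀ * U = 1) (c : α) :
    c • (1 : Matrix n n α) = U * diagonal (fun _ => c) * Uᵀ := by
  rw [← smul_one_eq_diagonal, Matrix.mul_smul, Matrix.mul_one, Matrix.smul_mul,
    mul_eq_one_comm.mp hU]

theorem det_mul_diagonal_mul_transpose (hU : Uᵀ * U = 1) (d : n → α) :
    (U * diagonal d * Uᵀ).det = ∏ i, d i := by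
  rw [det_mul_comm, ← Matrix.mul_assoc, hU, Matrix.one_mul, det_diagonal]

theorem trace_mul_diagonal_mul_transpose (hU : Uᵀ * U = 1) (d : n → α) :
    (U * diagonal d * Uᵀ).trace = ∑ i, d i := by
  rw [trace_mul_cycle, hU, Matrix.one_mul, trace_diagonal]

theorem inv_mul_diagonal_mul_transpose {K : Type*} [Field K] {U : Matrix n n K}
    (hU : Uᵀ * U = 1) {d : n → K} (hd : ∀ i, d i ≠ 0) :
    (U * diagonal d * Uᵀ)⁻¹ = U * diagonal d⁻¹ * Uᵀ := by
  refine inv_eq_right_inv ?_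
  have hdd : d * d⁻¹ = fun _ => 1 := funext fun i => mul_inv_cancel₀ (hd i)
  rw [mul_diagonal_mul_transpose_mul_mul_diagonal_mul_transpose hU, hdd, diagonal_one,
    Matrix.mul_one, mul_eq_one_comm.mp hU]

theorem pos_of_posDef_mul_diagonal_mul_transpose {U : Matrix n n ℝ} (hU : Uᵀ * U = 1)
    {d : n → ℝ} (h : (U * diagonal d * Uᵀ).PosDef) (i : n) : 0 < d i := by
  have hUunit : IsUnit U := IsUnit.of_mul_eq_one_right Uᵀ hU
  rw [← conjTranspose_eq_transpose_of_trivial, ← star_eq_conjTranspose,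
    IsUnit.posDef_star_right_conjugate_iff hUunit, posDef_diagonal_iff] at h
  exact h i

end Conjugation

theorem mul_mul_transpose_mul_of_mul_transpose_eq_one {l m α : Type*} [Fintype m]
    [DecidableEq m] [CommRing α] (A : Matrix l m α) {R : Matrix m m α} (hR : R * Rᵀ = 1) :
    A * R * (A * R)ᵀ = A * Aᵀ := by
  rw [transpose_mul, Matrix.mul_assoc, ← Matrix.mul_assoc R, hR, Matrix.one_mul]

theorem mul_diagonal_sqrt_mul_transpose {l m : Type*} [Fintype m] [DecidableEq m]
    (A : Matrix l m ℝ) {c : m → ℝ} (hc : ∀ i, 0 ≤ c i) :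
    A * diagonal (fun i => √(c i)) * (A * diagonal (fun i => √(c i)))ᵀ =
      A * diagonal c * Aᵀ := by
  rw [transpose_mul, diagonal_transpose, Matrix.mul_assoc, ← Matrix.mul_assoc (diagonal _),
    diagonal_mul_diagonal, ← Matrix.mul_assoc]
  simp only [Real.mul_self_sqrt (hc _)]

theorem submatrix_mul_diagonal_mul_transpose {l m n α : Type*} [Fintype m] [Fintype n]
    [DecidableEq m] [DecidableEq n] [CommRing α] (U : Matrix l n α) {e : m → n}
    (he : Function.Injective e) {d : n → α} (hd : ∀ i ∉ Set.range e, d i = 0) :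
    U.submatrix id e * diagonal (d ∘ e) * (U.submatrix id e)ᵀ = U * diagonal d * Uᵀ := by
  ext a b
  rw [mul_apply, mul_apply]
  simp only [mul_diagonal, transpose_apply, submatrix_apply, id, Function.comp_apply]
  exact Fintype.sum_of_injective e he _ _ (fun i hi => by simp [hd i hi]) fun _ => rfl

end Matrix

theorem Fin.sum_ite_val_lt {M : Type*} [AddCommMonoid M] {ℓ : ℕ} (q : ℕ) (f g : Fin ℓ → M) :
    ∑ i : Fin ℓ, (if (i : ℕ) < q then f i else g i) =
      ∑ i ∈ Finset.univ.filter (fun i : Fin ℓ => (i : ℕ) < q), f i +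
        ∑ i ∈ Finset.univ.filter (fun i : Fin ℓ => q ≤ (i : ℕ)), g i := by
  simp only [Finset.sum_ite, not_lt]

theorem Fin.card_filter_le_val {ℓ q : ℕ} (hq : q ≤ ℓ) :
    (Finset.univ.filter (fun i : Fin ℓ => q ≤ (i : ℕ))).card = ℓ - q := by
  have h := Finset.card_filter_add_card_filter_not (s := Finset.univ)
    (fun i : Fin ℓ => (i : ℕ) < q)
  simp only [not_lt, Finset.card_univ, Fintype.card_fin, Fin.card_filter_val_lt,
    min_eq_right hq] at h
  omega

theorem ppca_covariance_eq {ℓ q : ℕ} (hq : q ≤ ℓ) {U : Matrix (Fin ℓ) (Fin ℓ) ℝ}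
    (hU : Uᵀ * U = 1) {lam : Fin ℓ → ℝ} {σ2 : ℝ}
    (hgap : ∀ i : Fin ℓ, (i : ℕ) < q → σ2 ≤ lam i)
    {R : Matrix (Fin q) (Fin q) ℝ} (hR : Rᵀ * R = 1) :
    let W := U.submatrix id (Fin.castLE hq) *
      diagonal (fun i : Fin q => √(lam (Fin.castLE hq i) - σ2)) * R
    W * Wᵀ + σ2 • 1 = U * diagonal (fun i : Fin ℓ => if (i : ℕ) < q then lam i else σ2) * Uᵀ := by
  intro W
  set d : Fin ℓ → ℝ := fun i => if (i : ℕ) < q then lam i - σ2 else 0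
  have hd_range : ∀ i ∉ Set.range (Fin.castLE hq), d i = 0 := fun i hi =>
    if_neg fun hiq => hi ⟨⟨i, hiq⟩, rfl⟩
  have hd_castLE : d ∘ Fin.castLE hq = fun i => lam (Fin.castLE hq i) - σ2 :=
    funext fun i => if_pos i.isLt
  have hWW : W * Wᵀ = U * diagonal d * Uᵀ := by
    rw [mul_mul_transpose_mul_of_mul_transpose_eq_one _ (mul_eq_one_comm.mp hR),
      mul_diagonal_sqrt_mul_transpose _ fun i => sub_nonneg.2 (hgap _ i.isLt), ← hd_castLE,
      submatrix_mul_diagonal_mul_transpose U (Fin.castLE_injective hq) hd_range]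
  rw [hWW, smul_one_eq_mul_diagonal_mul_transpose hU, ← Matrix.add_mul, ← Matrix.mul_add,
    diagonal_add]
  congr 3
  funext i
  by_cases hi : (i : ℕ) < q <;> simp [d, hi]

theorem ppca_model_eigenstructure_general {ℓ q : ℕ} (hq : q < ℓ)
    (S : Matrix (Fin ℓ) (Fin ℓ) ℝ) (hS : S.PosDef)
    (lam : Fin ℓ → ℝ)
    (U : Matrix (Fin ℓ) (Fin ℓ) ℝ) (hU : Uᵀ * U = 1)
    (hSdecomp : S = U * Matrix.diagonal lam * Uᵀ)
    (σ2 : ℝ)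
    (hσ2 : σ2 = (1 / (ℓ - q : ℝ)) * ∑ j ∈ Finset.univ.filter (fun j : Fin ℓ => q ≤ (j : ℕ)), lam j)
    (hgap : ∀ i : Fin ℓ, (i : ℕ) < q → σ2 < lam i)
    (R : Matrix (Fin q) (Fin q) ℝ) (hR : Rᵀ * R = 1)
    (W : Matrix (Fin ℓ) (Fin q) ℝ)
    (hW : W = U.submatrix id (Fin.castLE hq.le) *
      Matrix.diagonal (fun i : Fin q => Real.sqrt (lam (Fin.castLE hq.le i) - σ2)) * R) :
    (W * Wᵀ + σ2 • (1 : Matrix (Fin ℓ) (Fin ℓ) ℝ)) * U =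
        U * Matrix.diagonal (fun i : Fin ℓ => if (i : ℕ) < q then lam i else σ2) ∧
      Real.log (W * Wᵀ + σ2 • (1 : Matrix (Fin ℓ) (Fin ℓ) ℝ)).det =
        (∑ j ∈ Finset.univ.filter (fun j : Fin ℓ => (j : ℕ) < q), Real.log (lam j)) +
          (ℓ - q : ℝ) * Real.log σ2 ∧
      ((W * Wᵀ + σ2 • (1 : Matrix (Fin ℓ) (Fin ℓ) ℝ))⁻¹ * S).trace =
        (q : ℝ) + (∑ j ∈ Finset.univ.filter (fun j : Fin ℓ => q ≤ (j : ℕ)), lam j / σ2) ∧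
      ((W * Wᵀ + σ2 • (1 : Matrix (Fin ℓ) (Fin ℓ) ℝ))⁻¹ * S).trace = (ℓ : ℝ) := by
  have hlam_pos : ∀ i, 0 < lam i := pos_of_posDef_mul_diagonal_mul_transpose hU (hSdecomp ▸ hS)
  have hℓq : (0 : ℝ) < ℓ - q := sub_pos.2 (by exact_mod_cast hq)
  have hσ2_pos : 0 < σ2 := hσ2 ▸ mul_pos (one_div_pos.2 hℓq)
    (Finset.sum_pos (fun i _ => hlam_pos i) ⟨⟨q, hq⟩, by simp⟩)
  have hcard : ((Finset.univ.filter (fun j : Fin ℓ => q ≤ (j : ℕ))).card : ℝ) = ℓ - q := by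
    rw [Fin.card_filter_le_val hq.le, Nat.cast_sub hq.le]
  set g : Fin ℓ → ℝ := fun i => if (i : ℕ) < q then lam i else σ2
  have hg_pos : ∀ i, 0 < g i := fun i => by
    by_cases hi : (i : ℕ) < q <;> simp [g, hi, hlam_pos i, hσ2_pos]
  have hM : W * Wᵀ + σ2 • 1 = U * diagonal g * Uᵀ :=
    hW ▸ ppca_covariance_eq hq.le hU (fun i hi => (hgap i hi).le) hR
  have htrace : ((W * Wᵀ + σ2 • 1)⁻¹ * S).trace =
      q + ∑ j ∈ Finset.univ.filter (fun j : Fin ℓ => q ≤ (j : ℕ)), lam j / σ2 := by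
    rw [hM, inv_mul_diagonal_mul_transpose hU fun i => (hg_pos i).ne', hSdecomp,
      mul_diagonal_mul_transpose_mul_mul_diagonal_mul_transpose hU,
      trace_mul_diagonal_mul_transpose hU]
    simp only [Pi.mul_apply, Pi.inv_apply, g, apply_ite (·⁻¹), ite_mul]
    rw [Fin.sum_ite_val_lt, Finset.sum_congr rfl fun i _ => inv_mul_cancel₀ (hlam_pos i).ne',
      Finset.sum_const, Fin.card_filter_val_lt, min_eq_right hq.le, nsmul_one]
    simp only [inv_mul_eq_div]
  refine ⟨hM ▸ mul_diagonal_mul_transpose_mul_self hU g, ?_, htrace, ?_⟩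
  · rw [hM, det_mul_diagonal_mul_transpose hU, Real.log_prod fun i _ => (hg_pos i).ne']
    simp only [g, apply_ite Real.log]
    rw [Fin.sum_ite_val_lt, Finset.sum_const, nsmul_eq_mul, hcard]
  · have hsum :
        ∑ j ∈ Finset.univ.filter (fun j : Fin ℓ => q ≤ (j : ℕ)), lam j = (ℓ - q) * σ2 := by
      rw [hσ2]; field_simp
    rw [htrace, ← Finset.sum_div, hsum, mul_div_cancel_right₀ _ hσ2_pos.ne']
    ring

theorem ppca_model_eigenstructure {ℓ q : ℕ} (hq : q < ℓ)
    (S : Matrix (Fin ℓ) (Fin ℓ) ℝ) (hS : S.PosDef)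
    (lam : Fin ℓ → ℝ) (hlam : Antitone lam)
    (U : Matrix (Fin ℓ) (Fin ℓ) ℝ) (hU : Uᵀ * U = 1)
    (hSdecomp : S = U * Matrix.diagonal lam * Uᵀ)
    (σ2 : ℝ)
    (hσ2 : σ2 = (1 / (ℓ - q : ℝ)) * ∑ j ∈ Finset.univ.filter (fun j : Fin ℓ => q ≤ (j : ℕ)), lam j)
    (hgap : ∀ i : Fin ℓ, (i : ℕ) < q → σ2 < lam i)
    (R : Matrix (Fin q) (Fin q) ℝ) (hR : Rᵀ * R = 1)
    (W : Matrix (Fin ℓ) (Fin q) ℝ)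
    (hW : W = U.submatrix id (Fin.castLE hq.le) *
      Matrix.diagonal (fun i : Fin q => Real.sqrt (lam (Fin.castLE hq.le i) - σ2)) * R) :
    (W * Wᵀ + σ2 • (1 : Matrix (Fin ℓ) (Fin ℓ) ℝ)) * U =
        U * Matrix.diagonal (fun i : Fin ℓ => if (i : ℕ) < q then lam i else σ2) ∧
      Real.log (W * Wᵀ + σ2 • (1 : Matrix (Fin ℓ) (Fin ℓ) ℝ)).det =
        (∑ j ∈ Finset.univ.filter (fun j : Fin ℓ => (j : ℕ) < q), Real.log (lam j)) +
          (ℓ - q : ℝ) * Real.log σ2 ∧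
      ((W * Wᵀ + σ2 • (1 : Matrix (Fin ℓ) (Fin ℓ) ℝ))⁻¹ * S).trace =
        (q : ℝ) + (∑ j ∈ Finset.univ.filter (fun j : Fin ℓ => q ≤ (j : ℕ)), lam j / σ2) ∧
      ((W * Wᵀ + σ2 • (1 : Matrix (Fin ℓ) (Fin ℓ) ℝ))⁻¹ * S).trace = (ℓ : ℝ) :=
  ppca_model_eigenstructure_general hq S hS lam U hU hSdecomp σ2 hσ2 hgap R hR W hW
end
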